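/- arXiv:1204.4874 — 8 statements merged into one kernel-verified Lean document; each statement's English description precedes it below -/
import Mathlib

section
/- Suppose A₁ - A₂ = g cᵀ and e₁ - e₂ = f g + μ c with μ ≥ 0. Then the set-valued map G defined by G(x) = {A₁x+e₁} if cᵀx+f < 0, G(x) = conv{A₁x+e₁, A₂x+e₂} if cᵀx+f = 0, and G(x) = {A₂x+e₂} if cᵀx+f > 0, is one-sided Lipschitz: there exists L such that (x₁−x₂)ᵀ(y₁−y₂) ≤ L‖x₁−x₂‖² for all x₁, x₂ ∈ ℝⁿ, y₁ ∈ G(x₁), y₂ ∈ G(x₂). -/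
/-!
Write `s = cᵀx + f`. The hypotheses give `A₁x + e₁ = A₂x + e₂ + s g + μ c`, so every
`y ∈ G(x)` equals `A₂x + e₂ + min(s, 0) g + μ t c` with `t ∈ [0, 1]` and `t s = min(s, 0)`.
The first three terms are a Lipschitz function of `x`, hence one-sided Lipschitz by
Cauchy–Schwarz; the selection `t` is antitone in `s`, so since `μ ≥ 0` the last term only
contributes `μ (t₁ - t₂)(s₁ - s₂) ≤ 0`.
-/

open Matrix

/-- The convexified set-valued map of a bimodal piecewise affine system. -/
def bimodalG (n : ℕ) (A₁ A₂ : Matrix (Fin n) (Fin n) ℝ) (e₁ e₂ c : Fin n → ℝ)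
    (f : ℝ) (x : Fin n → ℝ) : Set (Fin n → ℝ) :=
  if c ⬝ᵥ x + f < 0 then {A₁ *ᵥ x + e₁}
  else if c ⬝ᵥ x + f = 0 then convexHull ℝ {A₁ *ᵥ x + e₁, A₂ *ᵥ x + e₂}
  else {A₂ *ᵥ x + e₂}

open Set

section DotProduct

variable {ι m R : Type*} [Fintype ι] [Fintype m]

section OrderedCommRing

variable [CommRing R] [LinearOrder R] [IsStrictOrderedRing R]

theorem sq_dotProduct_le (u v : ι → R) : (u ⬝ᵥ v) ^ 2 ≤ (u ⬝ᵥ u) * (v ⬝ᵥ v) := by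
  simpa only [dotProduct, sq] using Finset.sum_mul_sq_le_sq_mul_sq Finset.univ u v

theorem two_mul_dotProduct_le (u v : ι → R) : 2 * (u ⬝ᵥ v) ≤ u ⬝ᵥ u + v ⬝ᵥ v := by
  simp only [dotProduct, Finset.mul_sum, ← Finset.sum_add_distrib, ← mul_assoc, ← sq]
  exact Finset.sum_le_sum fun i _ => two_mul_le_add_sq (u i) (v i)

theorem mulVec_dotProduct_mulVec_self_le (A : Matrix m ι R) (v : ι → R) :
    (A *ᵥ v) ⬝ᵥ (A *ᵥ v) ≤ (∑ i, A i ⬝ᵥ A i) * (v ⬝ᵥ v) := by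
  rw [Finset.sum_mul]
  exact Finset.sum_le_sum fun i _ => (sq (A i ⬝ᵥ v)).symm.trans_le (sq_dotProduct_le (A i) v)

end OrderedCommRing

variable [Field R] [LinearOrder R] [IsStrictOrderedRing R]

theorem dotProduct_mulVec_self_le (A : Matrix ι ι R) (v : ι → R) :
    v ⬝ᵥ (A *ᵥ v) ≤ (1 + ∑ i, A i ⬝ᵥ A i) / 2 * (v ⬝ᵥ v) := by
  have hamgm := two_mul_dotProduct_le v (A *ᵥ v)
  have hcs := mulVec_dotProduct_mulVec_self_le A v
  linarith

theorem mul_dotProduct_le_of_abs_le {a : R} {u v w : ι → R} (ha : |a| ≤ |u ⬝ᵥ w|) :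
    a * (v ⬝ᵥ w) ≤ (u ⬝ᵥ u + v ⬝ᵥ v) / 2 * (w ⬝ᵥ w) := by
  have hamgm := two_mul_le_add_sq |u ⬝ᵥ w| |v ⬝ᵥ w|
  rw [sq_abs, sq_abs] at hamgm
  have hu := sq_dotProduct_le u w
  have hv := sq_dotProduct_le v w
  calc a * (v ⬝ᵥ w) ≤ |a| * |v ⬝ᵥ w| := (le_abs_self _).trans (abs_mul _ _).le
    _ ≤ |u ⬝ᵥ w| * |v ⬝ᵥ w| := mul_le_mul_of_nonneg_right ha (abs_nonneg _)
    _ ≤ _ := by linarith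

end DotProduct

theorem abs_min_zero_sub_min_zero_le {α : Type*} [AddCommGroup α] [LinearOrder α]
    [IsOrderedAddMonoid α] (a b : α) : |min a 0 - min b 0| ≤ |a - b| := by
  simpa using abs_min_sub_min_le_max a 0 b 0

section Selection

variable {R : Type*} [CommRing R] [LinearOrder R] [IsStrictOrderedRing R]

theorem min_zero_le_mul {t : R} (ht : t ∈ Icc 0 1) (s : R) : min s 0 ≤ t * s := by
  rcases le_total s 0 with hs | hs
  · rw [min_eq_left hs]; nlinarith [ht.2]
  · exact (min_le_right s 0).trans (mul_nonneg ht.1 hs)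

theorem sub_mul_sub_nonpos_of_mul_eq_min {t₁ t₂ s₁ s₂ : R} (ht₁ : t₁ ∈ Icc 0 1)
    (ht₂ : t₂ ∈ Icc 0 1) (h₁ : t₁ * s₁ = min s₁ 0) (h₂ : t₂ * s₂ = min s₂ 0) :
    (t₁ - t₂) * (s₁ - s₂) ≤ 0 := by
  have h₁₂ := min_zero_le_mul ht₁ s₂
  have h₂₁ := min_zero_le_mul ht₂ s₁
  linear_combination h₁ + h₂ + h₁₂ + h₂₁

end Selection

section Bimodal

variable {n : ℕ} {A₁ A₂ : Matrix (Fin n) (Fin n) ℝ} {e₁ e₂ g c : Fin n → ℝ} {f μ : ℝ}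

theorem mulVec_add_eq_of_sub_eq (hA : A₁ - A₂ = vecMulVec g c) (he : e₁ - e₂ = f • g + μ • c)
    (x : Fin n → ℝ) : A₁ *ᵥ x + e₁ = A₂ *ᵥ x + e₂ + (c ⬝ᵥ x + f) • g + μ • c := by
  rw [sub_eq_iff_eq_add'] at hA he
  rw [hA, he, add_mulVec, vecMulVec_mulVec, op_smul_eq_smul, add_smul]
  abel

theorem exists_eq_of_mem_bimodalG (hA : A₁ - A₂ = vecMulVec g c)
    (he : e₁ - e₂ = f • g + μ • c) {x y : Fin n → ℝ} (hy : y ∈ bimodalG n A₁ A₂ e₁ e₂ c f x) :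
    ∃ t ∈ Icc (0 : ℝ) 1, t * (c ⬝ᵥ x + f) = min (c ⬝ᵥ x + f) 0 ∧
      y = A₂ *ᵥ x + e₂ + min (c ⬝ᵥ x + f) 0 • g + (μ * t) • c := by
  have key := mulVec_add_eq_of_sub_eq hA he x
  unfold bimodalG at hy
  split_ifs at hy with hneg hzero
  · refine ⟨1, right_mem_Icc.2 zero_le_one, by rw [one_mul, min_eq_left hneg.le], ?_⟩
    rw [mem_singleton_iff.1 hy, key, min_eq_left hneg.le, mul_one]
  · rw [convexHull_pair] at hy
    obtain ⟨u, v, hu, hv, huv, rfl⟩ := hy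
    refine ⟨u, ⟨hu, by linarith⟩, by rw [hzero, mul_zero, min_self], ?_⟩
    rw [key, hzero, min_self, eq_sub_of_add_eq' huv]
    module
  · have hpos : 0 < c ⬝ᵥ x + f := lt_of_le_of_ne (not_lt.1 hneg) (Ne.symm hzero)
    refine ⟨0, left_mem_Icc.2 zero_le_one, by rw [zero_mul, min_eq_right hpos.le], ?_⟩
    rw [mem_singleton_iff.1 hy, min_eq_right hpos.le]
    simp

end Bimodal

theorem bimodalG_one_sided_Lipschitz (n : ℕ)
    (A₁ A₂ : Matrix (Fin n) (Fin n) ℝ) (e₁ e₂ g c : Fin n → ℝ) (f μ : ℝ)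
    (hμ : 0 ≤ μ)
    (hA : A₁ - A₂ = Matrix.vecMulVec g c)
    (he : e₁ - e₂ = f • g + μ • c) :
    ∃ L : ℝ, ∀ x₁ x₂ y₁ y₂ : Fin n → ℝ,
      y₁ ∈ bimodalG n A₁ A₂ e₁ e₂ c f x₁ →
      y₂ ∈ bimodalG n A₁ A₂ e₁ e₂ c f x₂ →
      (x₁ - x₂) ⬝ᵥ (y₁ - y₂) ≤ L * ((x₁ - x₂) ⬝ᵥ (x₁ - x₂)) := by
  refine ⟨(1 + ∑ i, A₂ i ⬝ᵥ A₂ i) / 2 + (c ⬝ᵥ c + g ⬝ᵥ g) / 2, ?_⟩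
  intro x₁ x₂ y₁ y₂ hy₁ hy₂
  obtain ⟨t₁, ht₁, hts₁, rfl⟩ := exists_eq_of_mem_bimodalG hA he hy₁
  obtain ⟨t₂, ht₂, hts₂, rfl⟩ := exists_eq_of_mem_bimodalG hA he hy₂
  set s₁ := c ⬝ᵥ x₁ + f
  set s₂ := c ⬝ᵥ x₂ + f
  set d := x₁ - x₂
  have hcd : c ⬝ᵥ d = s₁ - s₂ := by simp only [d, s₁, s₂, dotProduct_sub]; ring
  have hexpand : d ⬝ᵥ (A₂ *ᵥ x₁ + e₂ + min s₁ 0 • g + (μ * t₁) • c -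
      (A₂ *ᵥ x₂ + e₂ + min s₂ 0 • g + (μ * t₂) • c)) =
      d ⬝ᵥ (A₂ *ᵥ d) + (min s₁ 0 - min s₂ 0) * (g ⬝ᵥ d) + μ * ((t₁ - t₂) * (s₁ - s₂)) := by
    rw [← hcd]
    simp only [d, mulVec_sub, dotProduct_add, dotProduct_sub, dotProduct_smul, smul_eq_mul,
      dotProduct_comm _ g, dotProduct_comm _ c]
    ring
  have hA₂ := dotProduct_mulVec_self_le A₂ d
  have hg := mul_dotProduct_le_of_abs_le (v := g)
    (hcd ▸ abs_min_zero_sub_min_zero_le s₁ s₂ : |min s₁ 0 - min s₂ 0| ≤ |c ⬝ᵥ d|)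
  have hc := mul_nonpos_of_nonneg_of_nonpos hμ (sub_mul_sub_nonpos_of_mul_eq_min ht₁ ht₂ hts₁ hts₂)
  rw [hexpand]
  linarith
end

section
/- Suppose the set-valued map G (defined by G(x) = {A₁x+e₁} if cᵀx+f < 0, G(x) = conv{A₁x+e₁, A₂x+e₂} if cᵀx+f = 0, and G(x) = {A₂x+e₂} if cᵀx+f > 0) is one-sided Lipschitz. Then there exist g ∈ ℝⁿ and μ ≥ 0 such that A₁ − A₂ = g cᵀ and e₁ − e₂ = f g + μ c. -/
open Matrix

/-!
Write `D = A₁ - A₂` and `ε = e₁ - e₂`, so that `D x + ε` is the jump of the vector field across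
the switching hyperplane `H = {cᵀx + f = 0}`. Testing the one-sided Lipschitz inequality at the
points `x̄ ± t d` of a base point `x̄ ∈ H`, with `cᵀd > 0`, and letting `t → 0` gives
`dᵀ(D x̄ + ε) ≥ 0`; since `d` ranges over an open half-space, `D x̄ + ε` lies on the ray `ℝ≥0 c`.
An affine map sending every line of `H` into a ray must be constant along `H`, so `D` kills the
direction space `c^⊥` of `H`, i.e. `D = g cᵀ`, and evaluating the jump at one point of `H`
identifies `ε`.
-/

open Filter Topology

def IsOneSidedLipschitz {ι : Type*} [Fintype ι] (G : (ι → ℝ) → Set (ι → ℝ)) : Prop :=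
  ∃ L : ℝ, ∀ x₁ x₂ y₁ y₂ : ι → ℝ, y₁ ∈ G x₁ → y₂ ∈ G x₂ →
    (x₁ - x₂) ⬝ᵥ (y₁ - y₂) ≤ L * ((x₁ - x₂) ⬝ᵥ (x₁ - x₂))

lemma nonpos_of_forall_pos_le_mul {a C : ℝ} (h : ∀ t : ℝ, 0 < t → a ≤ t * C) : a ≤ 0 := by
  have hlim : Tendsto (fun t : ℝ => t * C) (𝓝[>] 0) (𝓝 0) :=
    tendsto_nhdsWithin_of_tendsto_nhds <| by simpa using (continuous_mul_const C).tendsto 0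
  exact ge_of_tendsto hlim (eventually_nhdsWithin_of_forall h)

lemma eq_zero_of_forall_nonneg_add_mul {a b : ℝ} (h : ∀ s : ℝ, 0 ≤ a + s * b) : b = 0 := by
  by_contra hb
  have := h ((-a - 1) / b)
  rw [div_mul_cancel₀ _ hb] at this
  linarith

section DotProduct

variable {ι : Type*} [Fintype ι] {c : ι → ℝ}

lemma dotProduct_self_pos_of_ne_zero (hc : c ≠ 0) : 0 < c ⬝ᵥ c := by
  simpa using dotProduct_star_self_pos_iff.mpr hc

lemma exists_nonneg_smul_eq_of_forall_dotProduct_nonneg (hc : c ≠ 0) {v : ι → ℝ}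
    (h : ∀ d, 0 < c ⬝ᵥ d → 0 ≤ d ⬝ᵥ v) : ∃ μ : ℝ, 0 ≤ μ ∧ v = μ • c := by
  have hcc := dotProduct_self_pos_of_ne_zero hc
  have horth : ∀ d, c ⬝ᵥ d = 0 → d ⬝ᵥ v = 0 := fun d hd =>
    eq_zero_of_forall_nonneg_add_mul fun s => by
      simpa [add_dotProduct, dotProduct_add, hd, hcc] using h (c + s • d)
  set μ := (c ⬝ᵥ v) / (c ⬝ᵥ c)
  set w := v - μ • c
  have hcw : c ⬝ᵥ w = 0 := by
    simp only [w, μ, dotProduct_sub, dotProduct_smul, smul_eq_mul]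
    field_simp
    ring
  have hw : w ⬝ᵥ w = 0 := by
    have hwc : w ⬝ᵥ c = 0 := by rwa [dotProduct_comm]
    calc w ⬝ᵥ w = w ⬝ᵥ v - μ * (w ⬝ᵥ c) := by
          simp only [w, dotProduct_sub, dotProduct_smul, smul_eq_mul]
      _ = 0 := by rw [horth w hcw, hwc, mul_zero, sub_zero]
  refine ⟨μ, div_nonneg (h c hcc) hcc.le, ?_⟩
  exact sub_eq_zero.mp (dotProduct_self_eq_zero.mp hw)

lemma eq_zero_of_forall_add_smul_eq_nonneg_smul (hc : c ≠ 0) {u v : ι → ℝ}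
    (h : ∀ s : ℝ, ∃ μ : ℝ, 0 ≤ μ ∧ u + s • v = μ • c) : v = 0 := by
  have hcc := dotProduct_self_pos_of_ne_zero hc
  have hcv : c ⬝ᵥ v = 0 := eq_zero_of_forall_nonneg_add_mul fun s => by
    obtain ⟨μ, hμ, hs⟩ := h s
    have hdot := congrArg (c ⬝ᵥ ·) hs
    simp only [dotProduct_add, dotProduct_smul, smul_eq_mul] at hdot
    rw [hdot]
    positivity
  obtain ⟨μ₀, -, h₀⟩ := h 0
  obtain ⟨μ₁, -, h₁⟩ := h 1
  have hv : v = (μ₁ - μ₀) • c := by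
    rw [sub_smul, ← h₀, ← h₁]
    module
  rw [hv, dotProduct_smul, smul_eq_mul, mul_eq_zero, or_iff_left hcc.ne'] at hcv
  rw [hv, hcv, zero_smul]

lemma eq_vecMulVec_of_mulVec_orthogonal_eq_zero {κ : Type*} (hc : c ≠ 0) {D : Matrix κ ι ℝ}
    (h : ∀ w, c ⬝ᵥ w = 0 → D *ᵥ w = 0) : D = vecMulVec ((c ⬝ᵥ c)⁻¹ • (D *ᵥ c)) c := by
  have hcc := dotProduct_self_pos_of_ne_zero hc
  refine ext_iff_mulVec.mpr fun x => ?_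
  have hw : c ⬝ᵥ (x - ((c ⬝ᵥ x) / (c ⬝ᵥ c)) • c) = 0 := by
    rw [dotProduct_sub, dotProduct_smul, smul_eq_mul]
    field_simp
    ring
  have hDx := h _ hw
  rw [mulVec_sub, mulVec_smul, sub_eq_zero] at hDx
  rw [hDx, vecMulVec_mulVec, op_smul_eq_smul, smul_smul, div_eq_mul_inv, mul_comm]

lemma exists_eq_vecMulVec_of_forall_affine_eq_nonneg_smul (hc : c ≠ 0) {D : Matrix ι ι ℝ}
    {ε : ι → ℝ} {f : ℝ} (h : ∀ x, c ⬝ᵥ x + f = 0 → ∃ μ : ℝ, 0 ≤ μ ∧ D *ᵥ x + ε = μ • c) :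
    ∃ (g : ι → ℝ) (μ : ℝ), 0 ≤ μ ∧ D = vecMulVec g c ∧ ε = f • g + μ • c := by
  have hcc := dotProduct_self_pos_of_ne_zero hc
  obtain ⟨x₀, hx₀⟩ : ∃ x₀, c ⬝ᵥ x₀ + f = 0 := ⟨(-f / (c ⬝ᵥ c)) • c, by
    rw [dotProduct_smul, smul_eq_mul]
    field_simp
    ring⟩
  have hD := eq_vecMulVec_of_mulVec_orthogonal_eq_zero (D := D) hc fun w hw =>
    eq_zero_of_forall_add_smul_eq_nonneg_smul hc (u := D *ᵥ x₀ + ε) fun s => by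
      obtain ⟨μ, hμ, hs⟩ := h (x₀ + s • w) (by
        rw [dotProduct_add, dotProduct_smul, hw, smul_zero, add_zero, hx₀])
      exact ⟨μ, hμ, by rw [← hs, mulVec_add, mulVec_smul]; abel⟩
  obtain ⟨μ, hμ, hjump⟩ := h x₀ hx₀
  refine ⟨_, μ, hμ, hD, ?_⟩
  rw [hD, vecMulVec_mulVec, op_smul_eq_smul, eq_neg_of_add_eq_zero_left hx₀] at hjump
  rw [← hjump]
  module

end DotProduct

section Bimodal

variable {n : ℕ} {A₁ A₂ : Matrix (Fin n) (Fin n) ℝ} {e₁ e₂ c : Fin n → ℝ} {f : ℝ}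
  {x : Fin n → ℝ}

lemma bimodalG_of_neg (hx : c ⬝ᵥ x + f < 0) :
    bimodalG n A₁ A₂ e₁ e₂ c f x = {A₁ *ᵥ x + e₁} :=
  if_pos hx

lemma bimodalG_of_pos (hx : 0 < c ⬝ᵥ x + f) :
    bimodalG n A₁ A₂ e₁ e₂ c f x = {A₂ *ᵥ x + e₂} := by
  rw [bimodalG, if_neg hx.not_gt, if_neg hx.ne']

lemma IsOneSidedLipschitz.dotProduct_bimodal_jump_nonneg
    (hG : IsOneSidedLipschitz (bimodalG n A₁ A₂ e₁ e₂ c f)) (hx : c ⬝ᵥ x + f = 0)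
    {d : Fin n → ℝ} (hd : 0 < c ⬝ᵥ d) : 0 ≤ d ⬝ᵥ ((A₁ - A₂) *ᵥ x + (e₁ - e₂)) := by
  obtain ⟨L, hL⟩ := hG
  refine neg_nonpos.mp <| nonpos_of_forall_pos_le_mul
    (C := 2 * L * (d ⬝ᵥ d) - d ⬝ᵥ ((A₁ + A₂) *ᵥ d)) fun t ht => ?_
  have hsep : ∀ s : ℝ, c ⬝ᵥ (x + s • d) + f = s * (c ⬝ᵥ d) := fun s => by
    rw [dotProduct_add, dotProduct_smul, smul_eq_mul]
    linarith
  have hy₁ : A₂ *ᵥ (x + t • d) + e₂ ∈ bimodalG n A₁ A₂ e₁ e₂ c f (x + t • d) := by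
    rw [bimodalG_of_pos (by rw [hsep]; positivity)]
    rfl
  have hy₂ : A₁ *ᵥ (x + (-t) • d) + e₁ ∈ bimodalG n A₁ A₂ e₁ e₂ c f (x + (-t) • d) := by
    rw [bimodalG_of_neg (by rw [hsep]; nlinarith)]
    rfl
  have key := hL _ _ _ _ hy₁ hy₂
  rw [show x + t • d - (x + (-t) • d) = (2 * t) • d by module] at key
  simp only [sub_mulVec, add_mulVec, mulVec_add, mulVec_smul,
    dotProduct_add, dotProduct_sub, dotProduct_smul, smul_dotProduct, smul_eq_mul] at key ⊢
  nlinarith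

end Bimodal

theorem one_sided_Lipschitz_necessary (n : ℕ)
    (A₁ A₂ : Matrix (Fin n) (Fin n) ℝ) (e₁ e₂ c : Fin n → ℝ) (f : ℝ)
    (hc : c ≠ 0)
    (hL : ∃ L : ℝ, ∀ x₁ x₂ y₁ y₂ : Fin n → ℝ,
      y₁ ∈ bimodalG n A₁ A₂ e₁ e₂ c f x₁ →
      y₂ ∈ bimodalG n A₁ A₂ e₁ e₂ c f x₂ →
      (x₁ - x₂) ⬝ᵥ (y₁ - y₂) ≤ L * ((x₁ - x₂) ⬝ᵥ (x₁ - x₂))) :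
    ∃ (g : Fin n → ℝ) (μ : ℝ), 0 ≤ μ ∧
      A₁ - A₂ = Matrix.vecMulVec g c ∧ e₁ - e₂ = f • g + μ • c :=
  exists_eq_vecMulVec_of_forall_affine_eq_nonneg_smul hc fun _ hx =>
    exists_nonneg_smul_eq_of_forall_dotProduct_nonneg hc fun _ hd =>
      IsOneSidedLipschitz.dotProduct_bimodal_jump_nonneg hL hx hd
end

section
/- Suppose A₁ − A₂ = g cᵀ for some g ∈ ℝⁿ and (A₁−A₂)x̄ + (e₁−e₂) lies in the polar cone of {x : cᵀx ≤ 0} for some x̄ with cᵀx̄ + f = 0. Then e₁ − e₂ = f g + μ c for some μ ≥ 0. -/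
open Matrix

/-! A vector `w` with `x ⬝ᵥ w ≤ 0` whenever `c ⬝ᵥ x ≤ 0` annihilates the hyperplane `c ⬝ᵥ x = 0`
(test with `x` and `-x`), so its component orthogonal to `c` is orthogonal to itself and vanishes:
`w = μ • c`, and testing with `x = -c` gives `μ ≥ 0`. Since `(A₁ - A₂) *ᵥ x̄ = (c ⬝ᵥ x̄) • g = -f • g`,
this applies to `w = e₁ - e₂ - f • g`. -/

section DotProduct

variable {ι 𝕜 : Type*} [Fintype ι] [Field 𝕜] [LinearOrder 𝕜] [IsStrictOrderedRing 𝕜]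

lemma dotProduct_self_nonneg (v : ι → 𝕜) : 0 ≤ v ⬝ᵥ v :=
  Finset.sum_nonneg fun i _ => mul_self_nonneg (v i)

lemma dotProduct_eq_zero_of_forall_dotProduct_nonpos {c w : ι → 𝕜}
    (hw : ∀ x, c ⬝ᵥ x ≤ 0 → x ⬝ᵥ w ≤ 0) {x : ι → 𝕜} (hx : c ⬝ᵥ x = 0) : x ⬝ᵥ w = 0 := by
  have hneg := hw (-x) (by rw [dotProduct_neg, hx, neg_zero])
  rw [neg_dotProduct] at hneg
  exact le_antisymm (hw x hx.le) (by linarith)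

lemma dotProduct_div_self_mul (c w : ι → 𝕜) :
    c ⬝ᵥ w / (c ⬝ᵥ c) * (c ⬝ᵥ c) = c ⬝ᵥ w := by
  by_cases hc : c = 0
  · simp [hc]
  · exact div_mul_cancel₀ _ (mt dotProduct_self_eq_zero.mp hc)

lemma eq_smul_of_forall_dotProduct_eq_zero {c w : ι → 𝕜}
    (hw : ∀ x, c ⬝ᵥ x = 0 → x ⬝ᵥ w = 0) : w = (c ⬝ᵥ w / (c ⬝ᵥ c)) • c := by
  set μ := c ⬝ᵥ w / (c ⬝ᵥ c)
  have hcp : c ⬝ᵥ (w - μ • c) = 0 := by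
    rw [dotProduct_sub, dotProduct_smul, smul_eq_mul, dotProduct_div_self_mul, sub_self]
  have hpp : (w - μ • c) ⬝ᵥ (w - μ • c) = 0 := by
    rw [dotProduct_sub (w - μ • c), hw _ hcp, dotProduct_smul, dotProduct_comm, hcp,
      smul_zero, sub_zero]
  exact sub_eq_zero.mp (dotProduct_self_eq_zero.mp hpp)

theorem exists_nonneg_smul_of_forall_dotProduct_nonpos {c w : ι → 𝕜}
    (hw : ∀ x, c ⬝ᵥ x ≤ 0 → x ⬝ᵥ w ≤ 0) : ∃ μ : 𝕜, 0 ≤ μ ∧ w = μ • c := by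
  refine ⟨c ⬝ᵥ w / (c ⬝ᵥ c), div_nonneg ?_ (dotProduct_self_nonneg c),
    eq_smul_of_forall_dotProduct_eq_zero fun x => dotProduct_eq_zero_of_forall_dotProduct_nonpos hw⟩
  have h := hw (-c) (by rw [dotProduct_neg, neg_nonpos]; exact dotProduct_self_nonneg c)
  rw [neg_dotProduct, neg_nonpos] at h
  exact h

end DotProduct

theorem affine_term_in_polar_cone_general (n : ℕ)
    (A₁ A₂ : Matrix (Fin n) (Fin n) ℝ) (e₁ e₂ g c : Fin n → ℝ) (f : ℝ)
    (xbar : Fin n → ℝ)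
    (hA : A₁ - A₂ = Matrix.vecMulVec g c)
    (hxbar : c ⬝ᵥ xbar + f = 0)
    (hpolar : ∀ x : Fin n → ℝ, c ⬝ᵥ x ≤ 0 →
      x ⬝ᵥ ((A₁ - A₂) *ᵥ xbar + (e₁ - e₂)) ≤ 0) :
    ∃ μ : ℝ, 0 ≤ μ ∧ e₁ - e₂ = f • g + μ • c := by
  have hw : (A₁ - A₂) *ᵥ xbar + (e₁ - e₂) = e₁ - e₂ - f • g := by
    rw [hA, vecMulVec_mulVec, eq_neg_of_add_eq_zero_left hxbar]
    rw [op_smul_eq_smul, neg_smul]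
    abel
  rw [hw] at hpolar
  obtain ⟨μ, hμ, hμc⟩ := exists_nonneg_smul_of_forall_dotProduct_nonpos hpolar
  exact ⟨μ, hμ, by rw [← hμc]; abel⟩

theorem affine_term_in_polar_cone (n : ℕ)
    (A₁ A₂ : Matrix (Fin n) (Fin n) ℝ) (e₁ e₂ g c : Fin n → ℝ) (f : ℝ)
    (xbar : Fin n → ℝ) (hc : c ≠ 0)
    (hA : A₁ - A₂ = Matrix.vecMulVec g c)
    (hxbar : c ⬝ᵥ xbar + f = 0)
    (hpolar : ∀ x : Fin n → ℝ, c ⬝ᵥ x ≤ 0 →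
      x ⬝ᵥ ((A₁ - A₂) *ᵥ xbar + (e₁ - e₂)) ≤ 0) :
    ∃ μ : ℝ, 0 ≤ μ ∧ e₁ - e₂ = f • g + μ • c :=
  affine_term_in_polar_cone_general n A₁ A₂ e₁ e₂ g c f xbar hA hxbar hpolar
end

section
/- Let P₁, P₂ be m×n real matrices with P₁ of full row rank and q₁, q₂ ∈ ℝᵐ. If P₁ = M P₂ and q₁ = M q₂ for some m×m lower triangular matrix M with positive diagonal entries, then for all x ∈ ℝⁿ, P₁x − q₁ ≺ 0 implies P₂x − q₂ ≺ 0 (where ≺ is lexicographic negativity: the vector is nonzero and its first nonzero entry is negative). -/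
/-!
Writing `P₁ x - q₁ = M (P₂ x - q₂)`, the claim is that multiplication by a lower triangular `M`
with positive diagonal reflects lexicographic signs: by strong induction along the leading zeros,
`(M v)_j = M_jj v_j` up to the first nonzero index of `M v`, so `v` has the same first nonzero
index, with an entry of the same sign.
-/

open Matrix

/-- `v ≻ 0`: `v` is nonzero and its first nonzero entry is positive. -/
def lexPos {m : ℕ} (v : Fin m → ℝ) : Prop :=
  ∃ k : Fin m, 0 < v k ∧ ∀ j : Fin m, j < k → v j = 0

/-- `v ≺ 0`: `v` is nonzero and its first nonzero entry is negative. -/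
def lexNeg {m : ℕ} (v : Fin m → ℝ) : Prop := lexPos (-v)

theorem Matrix.mulVec_apply_eq_diag_mul_of_lowerTriangular {ι R : Type*} [Fintype ι]
    [LinearOrder ι] [NonUnitalNonAssocSemiring R] {M : Matrix ι ι R}
    (hM : ∀ i j, i < j → M i j = 0) {v : ι → R} {k : ι} (hv : ∀ j < k, v j = 0) :
    (M *ᵥ v) k = M k k * v k := by
  rw [mulVec, dotProduct, Finset.sum_eq_single k]
  · intro j _ hjk
    rcases hjk.lt_or_gt with hlt | hgt
    · rw [hv j hlt, mul_zero]
    · rw [hM k j hgt, zero_mul]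
  · simp

section LowerTriangular

variable {m : ℕ} {M : Matrix (Fin m) (Fin m) ℝ}

theorem lexPos_of_lexPos_mulVec (hM : ∀ i j, i < j → M i j = 0) (hdiag : ∀ i, 0 < M i i)
    {v : Fin m → ℝ} (h : lexPos (M *ᵥ v)) : lexPos v := by
  obtain ⟨k, hk_pos, hk_zero⟩ := h
  have hv_zero : ∀ j < k, v j = 0 := by
    intro j
    induction j using WellFoundedLT.induction with
    | _ j ih =>
      intro hjk
      have hj : (M *ᵥ v) j = M j j * v j :=
        mulVec_apply_eq_diag_mul_of_lowerTriangular hM fun i hij => ih i hij (hij.trans hjk)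
      rw [hk_zero j hjk] at hj
      exact (mul_eq_zero.1 hj.symm).resolve_left (hdiag j).ne'
  refine ⟨k, ?_, hv_zero⟩
  rw [mulVec_apply_eq_diag_mul_of_lowerTriangular hM hv_zero] at hk_pos
  exact pos_of_mul_pos_right hk_pos (hdiag k).le

theorem lexNeg_of_lexNeg_mulVec (hM : ∀ i j, i < j → M i j = 0) (hdiag : ∀ i, 0 < M i i)
    {v : Fin m → ℝ} (h : lexNeg (M *ᵥ v)) : lexNeg v := by
  rw [lexNeg, ← mulVec_neg] at h
  exact lexPos_of_lexPos_mulVec hM hdiag h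

end LowerTriangular

theorem lex_implication_of_triangular_relation_general (m n : ℕ)
    (P₁ P₂ : Matrix (Fin m) (Fin n) ℝ) (q₁ q₂ : Fin m → ℝ)
    (M : Matrix (Fin m) (Fin m) ℝ)
    (hMlow : ∀ i j : Fin m, i < j → M i j = 0)
    (hMdiag : ∀ i : Fin m, 0 < M i i)
    (hP : P₁ = M * P₂) (hq : q₁ = M *ᵥ q₂) :
    ∀ x : Fin n → ℝ, lexNeg (P₁ *ᵥ x - q₁) → lexNeg (P₂ *ᵥ x - q₂) := by
  intro x hx
  rw [hP, hq, ← mulVec_mulVec, ← mulVec_sub] at hx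
  exact lexNeg_of_lexNeg_mulVec hMlow hMdiag hx

theorem lex_implication_of_triangular_relation (m n : ℕ)
    (P₁ P₂ : Matrix (Fin m) (Fin n) ℝ) (q₁ q₂ : Fin m → ℝ)
    (hrank : LinearIndependent ℝ P₁)
    (M : Matrix (Fin m) (Fin m) ℝ)
    (hMlow : ∀ i j : Fin m, i < j → M i j = 0)
    (hMdiag : ∀ i : Fin m, 0 < M i i)
    (hP : P₁ = M * P₂) (hq : q₁ = M *ᵥ q₂) :
    ∀ x : Fin n → ℝ, lexNeg (P₁ *ᵥ x - q₁) → lexNeg (P₂ *ᵥ x - q₂) :=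
  lex_implication_of_triangular_relation_general m n P₁ P₂ q₁ q₂ M hMlow hMdiag hP hq
end

section
/- Let the lexicographic implication 'P₁x ≺ q₁ ⟹ P₂x ⪯ q₂ for all x' hold, where P₁, P₂ are m×n matrices of full row rank and q₁, q₂ ∈ ℝᵐ. Then either P₁ = MP₂ and q₁ = Mq₂ for some m×m lower triangular matrix M with positive diagonal entries, or there exist 1 ≤ ℓ ≤ m and an ℓ×ℓ lower triangular matrix M with positive diagonal entries such that P₁^[ℓ] = M P₂^[ℓ] and q₁^[ℓ] ≺ M q₂^[ℓ]. -/
open Matrix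

/-!
Work row by row, reading the rows of `P₁, P₂` as linear functionals. Suppose the first `k` rows
satisfy `P₁ = M P₂`, `q₁ = M q₂` with `M` lower triangular with positive diagonal. Then both systems
cut out the same affine subspace `S = {x | P₁^[k] x = q₁^[k]}`, and on `S` the lexicographic
implication says that the open half-space `P₁ₖ x < q₁ₖ` lies in `P₂ₖ x ≤ q₂ₖ`. By a two-functional
Farkas lemma on `S`, `P₂ₖ` restricted to the direction of `S` is a positive multiple of `P₁ₖ`, so
`P₁ₖ` is `μ⁻¹ P₂ₖ` plus a combination of the earlier rows of `P₂`; this is row `k` of `M`, and it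
gives `q₁ₖ ≤ (M q₂)ₖ`. Equality lets the induction continue; a strict inequality gives the second
alternative with `ℓ = k + 1`.
-/

open Module

theorem Module.Dual.exists_pos_smul_of_lt_imp_le {E : Type*} [AddCommGroup E] [Module ℝ E]
    {f g : Dual ℝ E} {α β : ℝ} (hf : f ≠ 0) (hg : g ≠ 0) (h : ∀ x, f x < α → g x ≤ β) :
    ∃ μ : ℝ, 0 < μ ∧ g = μ • f ∧ μ * α ≤ β := by
  obtain ⟨e, he⟩ : ∃ e, f e = 1 := by
    obtain ⟨x, hx⟩ := DFunLike.ne_iff.mp hf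
    exact ⟨(f x)⁻¹ • x, by simp_all⟩
  -- `(α - 1) • e + t • z` lies in `{f < α}` for every `t`, so `g z` cannot be nonzero.
  have hker : ∀ z, f z = 0 → g z = 0 := by
    intro z hz
    by_contra hgz
    have := h ((α - 1) • e + ((β + 1 - (α - 1) * g e) / g z) • z) (by simp [he, hz])
    simp only [map_add, map_smul, smul_eq_mul, div_mul_cancel₀ _ hgz] at this
    linarith
  set μ := g e
  have hgf : g = μ • f := by
    ext x
    have := hker (x - f x • e) (by simp [he])
    simp only [map_sub, map_smul, smul_eq_mul, sub_eq_zero] at this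
    simp [this, μ, mul_comm]
  have hμs : ∀ s < α, μ * s ≤ β := fun s hs => by
    simpa [hgf, he, mul_comm] using h (s • e) (by simpa [he])
  have hμ : 0 < μ := by
    have hμ0 : μ ≠ 0 := by rintro h0; apply hg; rw [hgf, h0, zero_smul]
    by_contra! hneg
    have hlt : μ < 0 := lt_of_le_of_ne hneg hμ0
    have hs := hμs (min (α - 1) ((β + 1) / μ)) (by linarith [min_le_left (α - 1) ((β + 1) / μ)])
    have : μ * ((β + 1) / μ) ≤ μ * min (α - 1) ((β + 1) / μ) :=
      mul_le_mul_of_nonpos_left (min_le_right _ _) hlt.le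
    rw [mul_div_cancel₀ _ hμ0] at this
    linarith
  refine ⟨μ, hμ, hgf, ?_⟩
  have : α ≤ β / μ := le_of_forall_lt_imp_le_of_dense fun s hs => by
    rw [le_div_iff₀ hμ, mul_comm]; exact hμs s hs
  rwa [le_div_iff₀ hμ, mul_comm] at this

theorem LinearIndependent.surjective_pi {K V ι : Type*} [Field K] [AddCommGroup V] [Module K V]
    [Fintype ι] [DecidableEq ι] {L : ι → Dual K V} (hL : LinearIndependent K L) :
    Function.Surjective (LinearMap.pi L) := by
  rw [← LinearMap.dualMap_injective_iff, ← LinearMap.ker_eq_bot, Submodule.eq_bot_iff]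
  intro φ hφ
  have hcomb : ∑ i, φ (fun j => if i = j then 1 else 0) • L i = 0 := by
    ext x
    have := LinearMap.congr_fun (LinearMap.mem_ker.mp hφ) x
    rw [LinearMap.dualMap_apply, LinearMap.pi_apply_eq_sum_univ] at this
    simpa [mul_comm] using this
  refine LinearMap.ext fun v => ?_
  rw [LinearMap.pi_apply_eq_sum_univ]
  simp [Fintype.linearIndependent_iff.mp hL _ hcomb]

theorem LinearIndependent.not_iInf_ker_le_ker {K V ι : Type*} [Field K] [AddCommGroup V]
    [Module K V] {L : ι → Dual K V} (hL : LinearIndependent K L) {s : Set ι} [Finite s] {k : ι}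
    (hk : k ∉ s) : ¬ ⨅ i : s, LinearMap.ker (L i) ≤ LinearMap.ker (L k) := fun h =>
  hL.notMem_span_image hk (by simpa [Set.image_eq_range] using mem_span_of_iInf_ker_le_ker h)

namespace Matrix

variable {R : Type*} [Semiring R] {m : ℕ} {M : Matrix (Fin m) (Fin m) R}

theorem mulVec_apply_eq_sum_Iic_of_lowerTriangular (hM : ∀ i j, i < j → M i j = 0)
    (v : Fin m → R) (i : Fin m) : (M *ᵥ v) i = ∑ j ≤ i, M i j * v j :=
  .symm <| Finset.sum_subset (Finset.subset_univ _) fun j _ hj => by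
    simp [hM i j (by simpa using hj)]

theorem mulVec_eq_zero_on_Iio_of_lowerTriangular (hM : ∀ i j, i < j → M i j = 0)
    {w : Fin m → R} {k : Fin m} (hw : ∀ i < k, w i = 0) : ∀ i < k, (M *ᵥ w) i = 0 :=
  fun i hi => by
    rw [mulVec_apply_eq_sum_Iic_of_lowerTriangular hM]
    exact Finset.sum_eq_zero fun j hj => by
      rw [hw j ((Finset.mem_Iic.mp hj).trans_lt hi), mul_zero]

theorem eq_zero_on_Iio_of_mulVec_of_lowerTriangular [NoZeroDivisors R]
    (hM : ∀ i j, i < j → M i j = 0) (hdiag : ∀ i, M i i ≠ 0) {w : Fin m → R} {k : Fin m}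
    (hw : ∀ i < k, (M *ᵥ w) i = 0) : ∀ i < k, w i = 0 := by
  intro i
  induction i using WellFoundedLT.induction with
  | _ i ih =>
    intro hi
    have hsum := hw i hi
    rw [mulVec_apply_eq_sum_Iic_of_lowerTriangular hM,
      Finset.sum_eq_single_of_mem i (Finset.mem_Iic.mpr le_rfl) fun j hj hji => by
        have hji : j < i := lt_of_le_of_ne (Finset.mem_Iic.mp hj) hji
        rw [ih j hji (hji.trans hi), mul_zero]] at hsum
    exact (mul_eq_zero.mp hsum).resolve_left (hdiag i)

theorem submatrix_castLE_mulVec_of_lowerTriangular (hM : ∀ i j, i < j → M i j = 0) {ℓ : ℕ}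
    (h : ℓ ≤ m) (v : Fin m → R) :
    M.submatrix (Fin.castLE h) (Fin.castLE h) *ᵥ (v ∘ Fin.castLE h) = (M *ᵥ v) ∘ Fin.castLE h := by
  have hM' : ∀ i j, i < j → M.submatrix (Fin.castLE h) (Fin.castLE h) i j = 0 :=
    fun i j hij => hM _ _ hij
  funext i
  rw [Function.comp_apply, mulVec_apply_eq_sum_Iic_of_lowerTriangular hM,
    mulVec_apply_eq_sum_Iic_of_lowerTriangular hM', Fin.sum_Iic_castLE]
  rfl

theorem mul_apply_eq_of_dotProductEquiv_eq_sum {R ι κ : Type*} [CommSemiring R] [Fintype ι]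
    [DecidableEq ι] [Fintype κ] {A : Matrix κ κ R} {P Q : Matrix κ ι R} {i : κ}
    (h : dotProductEquiv R ι (P i) = ∑ j, A i j • dotProductEquiv R ι (Q j)) : P i = (A * Q) i :=
  (dotProductEquiv R ι).injective <| by simpa [mul_apply_eq_vecMul, vecMul_eq_sum, map_sum] using h

end Matrix

theorem nonneg_of_lexPos_or_eq_zero {m : ℕ} {v : Fin m → ℝ} (hv : v = 0 ∨ lexPos v) {k : Fin m}
    (hk : ∀ i < k, v i = 0) : 0 ≤ v k := by
  obtain rfl | ⟨j, hj, hzero⟩ := hv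
  · rfl
  rcases lt_trichotomy j k with hjk | rfl | hkj
  · exact absurd (hk j hjk) hj.ne'
  · exact hj.le
  · exact (hzero k hkj).ge

section LexImplication

variable {E : Type*} [AddCommGroup E] [Module ℝ E] {m : ℕ} {L₁ L₂ : Fin m → Dual ℝ E}
  {q₁ q₂ : Fin m → ℝ} {M : Matrix (Fin m) (Fin m) ℝ} {k : Fin m}

theorem apply_eq_on_Iio_of_lowerTriangular (hM : ∀ i j, i < j → M i j = 0)
    (hdiag : ∀ i, M i i ≠ 0) (hrel : ∀ i < k, L₁ i = ∑ j, M i j • L₂ j ∧ q₁ i = (M *ᵥ q₂) i)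
    {x : E} (hx : ∀ i < k, L₁ i x = q₁ i) : ∀ i < k, L₂ i x = q₂ i := by
  have hMw : ∀ i < k, (M *ᵥ ((fun j => L₂ j x) - q₂)) i = 0 := fun i hi => by
    rw [mulVec_sub, Pi.sub_apply, ← (hrel i hi).2, ← hx i hi, (hrel i hi).1]
    simp [mulVec, dotProduct]
  simpa [sub_eq_zero] using eq_zero_on_Iio_of_mulVec_of_lowerTriangular hM hdiag hMw

theorem iInf_ker_Iio_le_of_lowerTriangular (hM : ∀ i j, i < j → M i j = 0)
    (hrel : ∀ i < k, L₁ i = ∑ j, M i j • L₂ j) :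
    ⨅ i : Set.Iio k, LinearMap.ker (L₂ i) ≤ ⨅ i : Set.Iio k, LinearMap.ker (L₁ i) := by
  intro v hv
  simp only [Submodule.mem_iInf, LinearMap.mem_ker, Subtype.forall, Set.mem_Iio] at hv ⊢
  intro i hi
  rw [hrel i hi, ← mulVec_eq_zero_on_Iio_of_lowerTriangular hM (w := fun j => L₂ j v) hv i hi]
  simp [mulVec, dotProduct]

theorem exists_row_of_lex_imp (h₁ : LinearIndependent ℝ L₁) (h₂ : LinearIndependent ℝ L₂)
    (himp : ∀ x, lexPos (q₁ - fun i => L₁ i x) →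
      (fun i => L₂ i x) = q₂ ∨ lexPos (q₂ - fun i => L₂ i x))
    (hM : ∀ i j, i < j → M i j = 0) (hdiag : ∀ i, M i i ≠ 0)
    (hrel : ∀ i < k, L₁ i = ∑ j, M i j • L₂ j ∧ q₁ i = (M *ᵥ q₂) i) :
    ∃ r : Fin m → ℝ, (∀ j, k < j → r j = 0) ∧ 0 < r k ∧ L₁ k = ∑ j, r j • L₂ j ∧
      q₁ k ≤ r ⬝ᵥ q₂ := by
  obtain ⟨x₀, hx₀⟩ := h₁.surjective_pi q₁
  replace hx₀ : ∀ i, L₁ i x₀ = q₁ i := congrFun hx₀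
  set V := ⨅ i : Set.Iio k, LinearMap.ker (L₁ i)
  have hV : ∀ v ∈ V, ∀ i < k, L₁ i v = 0 := by simp [V, Submodule.mem_iInf]
  have hVle := iInf_ker_Iio_le_of_lowerTriangular hM fun i hi => (hrel i hi).1
  have hkIio : k ∉ Set.Iio k := lt_irrefl k
  have hf : (L₁ k).domRestrict V ≠ 0 := fun h0 =>
    h₁.not_iInf_ker_le_ker hkIio fun v hv => LinearMap.congr_fun h0 ⟨v, hv⟩
  have hg : (L₂ k).domRestrict V ≠ 0 := fun h0 =>
    h₂.not_iInf_ker_le_ker hkIio fun v hv => LinearMap.congr_fun h0 ⟨v, hVle hv⟩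
  -- As `x₀` solves all of `L₁ = q₁`, on `x₀ + V` the half-space `L₁ k < q₁ k` is `L₁ k v < 0`.
  have hlex : ∀ v : V, (L₁ k).domRestrict V v < 0 → (L₂ k).domRestrict V v ≤ q₂ k - L₂ k x₀ := by
    rintro ⟨v, hv⟩ hneg
    have hpre₁ : ∀ i < k, L₁ i (x₀ + v) = q₁ i := fun i hi => by
      rw [map_add, hx₀, hV v hv i hi, add_zero]
    have hpre₂ := apply_eq_on_Iio_of_lowerTriangular hM hdiag hrel hpre₁
    have hpos : lexPos (q₁ - fun i => L₁ i (x₀ + v)) :=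
      ⟨k, by simpa [hx₀] using hneg, fun i hi => sub_eq_zero.mpr (hpre₁ i hi).symm⟩
    have := nonneg_of_lexPos_or_eq_zero ((himp _ hpos).imp_left (sub_eq_zero.mpr ·.symm))
      (k := k) fun i hi => sub_eq_zero.mpr (hpre₂ i hi).symm
    simp only [Pi.sub_apply, map_add] at this
    simp only [LinearMap.domRestrict_apply]
    linarith
  obtain ⟨μ, hμ, hgf, hβ⟩ := Dual.exists_pos_smul_of_lt_imp_le hf hg hlex
  have hspan : L₁ k - μ⁻¹ • L₂ k ∈ Submodule.span ℝ (L₂ '' Set.Iio k) := by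
    rw [Set.image_eq_range]
    refine mem_span_of_iInf_ker_le_ker fun v hv => ?_
    have := LinearMap.congr_fun hgf ⟨v, hVle hv⟩
    simp only [LinearMap.domRestrict_apply, LinearMap.smul_apply, smul_eq_mul] at this
    simp [this, hμ.ne']
  obtain ⟨l, hl, hlc⟩ := (Finsupp.mem_span_image_iff_linearCombination ℝ).1 hspan
  rw [Finsupp.mem_supported'] at hl
  set r : Fin m → ℝ := ⇑l + Pi.single k μ⁻¹
  have hr_gt : ∀ j, k < j → r j = 0 := fun j hj => by simp [r, hl j (not_lt.mpr hj.le), hj.ne']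
  have hr_k : r k = μ⁻¹ := by simp [r, hl k hkIio]
  have hrow : L₁ k = ∑ j, r j • L₂ j := by
    have hl_sum : ∑ j, l j • L₂ j = L₁ k - μ⁻¹ • L₂ k := by
      rw [← hlc, Finsupp.linearCombination_apply, Finsupp.sum_fintype _ _ (by simp)]
    simp [r, add_smul, Finset.sum_add_distrib, hl_sum, Pi.single_apply]
  have hx₀₂ := apply_eq_on_Iio_of_lowerTriangular hM hdiag hrel fun i _ => hx₀ i
  have hgap : r ⬝ᵥ q₂ - q₁ k = r k * (q₂ k - L₂ k x₀) := by
    have hq₁ : q₁ k = ∑ j, r j * L₂ j x₀ := by simp [← hx₀ k, hrow]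
    rw [hq₁, dotProduct, ← Finset.sum_sub_distrib]
    simp_rw [← mul_sub]
    refine Finset.sum_eq_single k (fun j _ hjk => ?_) (by simp)
    rcases hjk.lt_or_gt with hj | hj
    · rw [hx₀₂ j hj, sub_self, mul_zero]
    · rw [hr_gt j hj, zero_mul]
  refine ⟨r, hr_gt, hr_k ▸ inv_pos.mpr hμ, hrow, ?_⟩
  have : 0 ≤ r k * (q₂ k - L₂ k x₀) :=
    mul_nonneg (hr_k ▸ inv_nonneg.mpr hμ.le) (by simpa using hβ)
  linarith

theorem lowerTriangular_on_prefix_or_strict (h₁ : LinearIndependent ℝ L₁)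
    (h₂ : LinearIndependent ℝ L₂)
    (himp : ∀ x, lexPos (q₁ - fun i => L₁ i x) →
      (fun i => L₂ i x) = q₂ ∨ lexPos (q₂ - fun i => L₂ i x)) (n : ℕ) (hn : n ≤ m) :
    (∃ M : Matrix (Fin m) (Fin m) ℝ, (∀ i j, i < j → M i j = 0) ∧ (∀ i, 0 < M i i) ∧
      ∀ i : Fin m, (i : ℕ) < n → L₁ i = ∑ j, M i j • L₂ j ∧ q₁ i = (M *ᵥ q₂) i) ∨
    (∃ (M : Matrix (Fin m) (Fin m) ℝ) (k : Fin m), (∀ i j, i < j → M i j = 0) ∧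
      (∀ i, 0 < M i i) ∧ (∀ i ≤ k, L₁ i = ∑ j, M i j • L₂ j) ∧
      (∀ i < k, q₁ i = (M *ᵥ q₂) i) ∧ q₁ k < (M *ᵥ q₂) k) := by
  induction n with
  | zero =>
    exact .inl ⟨1, fun i j hij => one_apply_ne hij.ne, fun i => by simp,
      fun i hi => absurd hi i.val.not_lt_zero⟩
  | succ n ih =>
    obtain ⟨M, hM, hdiag, hrel⟩ | hstrict := ih (Nat.le_of_succ_le hn)
    swap; · exact .inr hstrict
    set k : Fin m := ⟨n, hn⟩
    obtain ⟨r, hr_gt, hr_k, hrow, hq⟩ :=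
      exists_row_of_lex_imp h₁ h₂ himp hM (fun i => (hdiag i).ne') (k := k) fun i hi => hrel i hi
    set M' := M.updateRow k r
    have hM' : ∀ i j, i < j → M' i j = 0 := fun i j hij => by
      by_cases hi : i = k
      · subst hi; simp [M', hr_gt j hij]
      · simp [M', hi, hM i j hij]
    have hdiag' : ∀ i, 0 < M' i i := fun i => by
      by_cases hi : i = k
      · subst hi; simpa [M'] using hr_k
      · simpa [M', hi] using hdiag i
    have hold : ∀ i < k, L₁ i = ∑ j, M' i j • L₂ j ∧ q₁ i = (M' *ᵥ q₂) i := fun i hi => by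
      simpa [M', hi.ne, mulVec, dotProduct] using hrel i hi
    have hnew : L₁ k = ∑ j, M' k j • L₂ j := by simpa [M'] using hrow
    have hnew_q : (M' *ᵥ q₂) k = r ⬝ᵥ q₂ := by simp [M', mulVec]
    rcases hq.eq_or_lt with heq | hlt
    · refine .inl ⟨M', hM', hdiag', fun i hi => ?_⟩
      rcases (Nat.lt_succ_iff.mp hi).lt_or_eq with hi | hi
      · exact hold i hi
      · obtain rfl : i = k := Fin.ext hi
        exact ⟨hnew, heq.trans hnew_q.symm⟩
    · refine .inr ⟨M', k, hM', hdiag', fun i hi => ?_, fun i hi => (hold i hi).2, hnew_q ▸ hlt⟩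
      rcases hi.lt_or_eq with hi | rfl
      · exact (hold i hi).1
      · exact hnew

end LexImplication

theorem lex_implication_necessary_conditions (m n : ℕ)
    (P₁ P₂ : Matrix (Fin m) (Fin n) ℝ) (q₁ q₂ : Fin m → ℝ)
    (hrank₁ : LinearIndependent ℝ P₁) (hrank₂ : LinearIndependent ℝ P₂)
    (himp : ∀ x : Fin n → ℝ, lexPos (q₁ - P₁ *ᵥ x) →
      (P₂ *ᵥ x = q₂ ∨ lexPos (q₂ - P₂ *ᵥ x))) :
    (∃ M : Matrix (Fin m) (Fin m) ℝ,
      (∀ i j : Fin m, i < j → M i j = 0) ∧ (∀ i : Fin m, 0 < M i i) ∧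
      P₁ = M * P₂ ∧ q₁ = M *ᵥ q₂) ∨
    (∃ (ℓ : ℕ) (hℓ₁ : 1 ≤ ℓ) (hℓm : ℓ ≤ m) (M : Matrix (Fin ℓ) (Fin ℓ) ℝ),
      (∀ i j : Fin ℓ, i < j → M i j = 0) ∧ (∀ i : Fin ℓ, 0 < M i i) ∧
      P₁.submatrix (Fin.castLE hℓm) id = M * P₂.submatrix (Fin.castLE hℓm) id ∧
      lexPos (M *ᵥ (fun i : Fin ℓ => q₂ (Fin.castLE hℓm i)) -
        (fun i : Fin ℓ => q₁ (Fin.castLE hℓm i)))) := by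
  -- Rows read through `dotProductEquiv` turn `P *ᵥ x` into `fun i => L i x` definitionally.
  rcases lowerTriangular_on_prefix_or_strict (L₁ := fun i => dotProductEquiv ℝ (Fin n) (P₁ i))
    (L₂ := fun i => dotProductEquiv ℝ (Fin n) (P₂ i))
    (hrank₁.map' _ (dotProductEquiv ℝ (Fin n)).ker) (hrank₂.map' _ (dotProductEquiv ℝ (Fin n)).ker)
    himp m le_rfl with ⟨M, hM, hdiag, hrel⟩ | ⟨M, k, hM, hdiag, hrow, hq, hlt⟩
  · exact .inl ⟨M, hM, hdiag, funext fun i => mul_apply_eq_of_dotProductEquiv_eq_sum (hrel i i.2).1,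
      funext fun i => (hrel i i.2).2⟩
  · set c := Fin.castLE k.isLt
    refine .inr ⟨k + 1, k.val.succ_pos, k.isLt, M.submatrix c c, fun i j hij => hM _ _ hij,
      fun i => hdiag _, ?_, ?_⟩
    · ext i j
      exact (congrFun (mul_apply_eq_of_dotProductEquiv_eq_sum
          (hrow _ (Nat.lt_succ_iff.mp i.2))) j).trans
        (congrFun (submatrix_castLE_mulVec_of_lowerTriangular hM k.isLt (fun t => P₂ t j)) i).symm
    · have hvec : M.submatrix c c *ᵥ (fun i => q₂ (c i)) = fun i => (M *ᵥ q₂) (c i) :=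
        submatrix_castLE_mulVec_of_lowerTriangular hM k.isLt q₂
      rw [hvec]
      exact ⟨Fin.last k, sub_pos.mpr hlt, fun i hi => sub_eq_zero.mpr (hq (c i) hi).symm⟩
end

section
/- Define 𝔾₀ = 𝕀₀ = {I}, 𝔾ₖ = {AᵢG' : G' ∈ 𝔾ₖ₋₁, i ∈ {1,2}}, and ℍₖ = {A(λ)H' : λ ∈ [0,1], H' ∈ ℍₖ₋₁} where A(λ) = λA₁ + (1−λ)A₂. For G = A_{i_k}⋯A_{i_1} ∈ 𝔾ₖ set e_G = cᵀA_{i_k}⋯A_{i_2}e_{i_1}, and analogously e_H for H ∈ ℍₖ with e(λ) = λe₁ + (1−λ)e₂ (with e_I = f). Let 𝒢ₖ = {(G, e_G) : G ∈ 𝔾ₖ} and ℋₖ = {(H, e_H) : H ∈ ℍₖ}. Then conv(ℋₖ) = conv(𝒢ₖ) for every k ≥ 0. -/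
open Matrix

variable {n : ℕ}

/-- Auxiliary sets: `GAux A₁ A₂ e₁ e₂ j` is the set of pairs
`(A_{i_{j+1}}⋯A_{i_1}, A_{i_{j+1}}⋯A_{i_2} e_{i_1})` with each `iₗ ∈ {1,2}`. -/
def GAux (A₁ A₂ : Matrix (Fin n) (Fin n) ℝ) (e₁ e₂ : Fin n → ℝ) :
    ℕ → Set (Matrix (Fin n) (Fin n) ℝ × (Fin n → ℝ))
  | 0 => {(A₁, e₁), (A₂, e₂)}
  | j + 1 => {p | ∃ q ∈ GAux A₁ A₂ e₁ e₂ j,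
      p = (A₁ * q.1, A₁ *ᵥ q.2) ∨ p = (A₂ * q.1, A₂ *ᵥ q.2)}

/-- `𝒢ₖ = {(G, e_G) : G ∈ 𝔾ₖ}` with `e_I = f` and `e_G = cᵀA_{i_k}⋯A_{i_2}e_{i_1}`. -/
def GPairs (A₁ A₂ : Matrix (Fin n) (Fin n) ℝ) (e₁ e₂ c : Fin n → ℝ) (f : ℝ) :
    ℕ → Set (Matrix (Fin n) (Fin n) ℝ × ℝ)
  | 0 => {(1, f)}
  | j + 1 => {p | ∃ q ∈ GAux A₁ A₂ e₁ e₂ j, p = (q.1, c ⬝ᵥ q.2)}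

/-- Auxiliary sets for products of convex combinations `A(λ) = λA₁ + (1-λ)A₂`,
`e(λ) = λe₁ + (1-λ)e₂`. -/
def HAux (A₁ A₂ : Matrix (Fin n) (Fin n) ℝ) (e₁ e₂ : Fin n → ℝ) :
    ℕ → Set (Matrix (Fin n) (Fin n) ℝ × (Fin n → ℝ))
  | 0 => {p | ∃ l ∈ Set.Icc (0:ℝ) 1,
      p = (l • A₁ + (1 - l) • A₂, l • e₁ + (1 - l) • e₂)}
  | j + 1 => {p | ∃ q ∈ HAux A₁ A₂ e₁ e₂ j, ∃ l ∈ Set.Icc (0:ℝ) 1,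
      p = ((l • A₁ + (1 - l) • A₂) * q.1, (l • A₁ + (1 - l) • A₂) *ᵥ q.2)}

/-- `ℋₖ = {(H, e_H) : H ∈ ℍₖ}`. -/
def HPairs (A₁ A₂ : Matrix (Fin n) (Fin n) ℝ) (e₁ e₂ c : Fin n → ℝ) (f : ℝ) :
    ℕ → Set (Matrix (Fin n) (Fin n) ℝ × ℝ)
  | 0 => {(1, f)}
  | j + 1 => {p | ∃ q ∈ HAux A₁ A₂ e₁ e₂ j, p = (q.1, c ⬝ᵥ q.2)}

/-!
The set `ℍₖ` is obtained from `ℍₖ₋₁` by applying all convex combinations of the two linear maps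
`(M, v) ↦ (Aᵢ M, Aᵢ v)`, while `𝔾ₖ` is obtained from `𝔾ₖ₋₁` by applying the two maps themselves.
Each point of `ℍₖ` therefore lies on a segment between two points of the images of `ℍₖ₋₁`, and
conversely those images lie in `ℍₖ` (take `λ ∈ {0, 1}`); since linear maps commute with convex
hulls, equality of the hulls propagates from `k - 1` to `k`. Reading off `cᵀ` of the vector
component is linear as well.
-/

open Set

section ConvexHull

variable {𝕜 E F ι : Type*} [Ring 𝕜] [PartialOrder 𝕜] [AddCommGroup E] [Module 𝕜 E]
  [AddCommGroup F] [Module 𝕜 F]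

theorem segment_eq_image_smul_add_one_sub_smul [IsOrderedRing 𝕜] (x y : E) :
    segment 𝕜 x y = (fun θ : 𝕜 => θ • x + (1 - θ) • y) '' Icc 0 1 := by
  simp only [segment_symm 𝕜 x y, segment_eq_image, add_comm]

theorem convexHull_biUnion_segment [IsOrderedRing 𝕜] (f g : ι → E) (s : Set ι) :
    convexHull 𝕜 (⋃ i ∈ s, segment 𝕜 (f i) (g i)) = convexHull 𝕜 (f '' s ∪ g '' s) := by
  refine le_antisymm (convexHull_min (iUnion₂_subset fun i hi => ?_) (convex_convexHull 𝕜 _))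
    (convexHull_mono ?_)
  · exact segment_subset_convexHull (.inl ⟨i, hi, rfl⟩) (.inr ⟨i, hi, rfl⟩)
  · rintro _ (⟨i, hi, rfl⟩ | ⟨i, hi, rfl⟩)
    · exact mem_biUnion hi (left_mem_segment 𝕜 _ _)
    · exact mem_biUnion hi (right_mem_segment 𝕜 _ _)

theorem convexHull_image_union_image_congr {s t : Set E}
    (h : convexHull 𝕜 s = convexHull 𝕜 t) (f g : E →ₗ[𝕜] F) :
    convexHull 𝕜 (f '' s ∪ g '' s) = convexHull 𝕜 (f '' t ∪ g '' t) := by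
  rw [← convexHull_convexHull_union_left, ← convexHull_convexHull_union_right,
    ← f.image_convexHull, ← g.image_convexHull, h, f.image_convexHull, g.image_convexHull,
    convexHull_convexHull_union_left, convexHull_convexHull_union_right]

end ConvexHull

section MatrixPairs

variable {R m : Type*} [CommRing R] [Fintype m]

noncomputable def pairDotProduct (c : m → R) : (Matrix m m R × (m → R)) →ₗ[R] (Matrix m m R × R) :=
  LinearMap.id.prodMap (dotProductBilin R R c)

@[simp]
theorem pairDotProduct_apply (c : m → R) (q : Matrix m m R × (m → R)) :
    pairDotProduct c q = (q.1, c ⬝ᵥ q.2) :=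
  rfl

variable [DecidableEq m]

noncomputable def pairMulLeft (M : Matrix m m R) :
    (Matrix m m R × (m → R)) →ₗ[R] (Matrix m m R × (m → R)) :=
  (LinearMap.mulLeft R M).prodMap M.mulVecLin

@[simp]
theorem pairMulLeft_apply (M : Matrix m m R) (q : Matrix m m R × (m → R)) :
    pairMulLeft M q = (M * q.1, M *ᵥ q.2) :=
  rfl

theorem pairMulLeft_smul_add_smul (a b : R) (M N : Matrix m m R) (q : Matrix m m R × (m → R)) :
    pairMulLeft (a • M + b • N) q = a • pairMulLeft M q + b • pairMulLeft N q := by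
  simp [add_mul, add_mulVec, smul_mulVec]

end MatrixPairs

section Products

variable (A₁ A₂ : Matrix (Fin n) (Fin n) ℝ) (e₁ e₂ c : Fin n → ℝ) (f : ℝ)

theorem GAux_succ (j : ℕ) :
    GAux A₁ A₂ e₁ e₂ (j + 1) =
      pairMulLeft A₁ '' GAux A₁ A₂ e₁ e₂ j ∪ pairMulLeft A₂ '' GAux A₁ A₂ e₁ e₂ j := by
  ext p
  simp only [GAux, mem_ofPred_eq, mem_union, mem_image, pairMulLeft_apply]
  grind

theorem HAux_zero : HAux A₁ A₂ e₁ e₂ 0 = segment ℝ (A₁, e₁) (A₂, e₂) := by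
  ext p
  simp [HAux, segment_eq_image_smul_add_one_sub_smul, eq_comm]

theorem HAux_succ (j : ℕ) :
    HAux A₁ A₂ e₁ e₂ (j + 1) =
      ⋃ q ∈ HAux A₁ A₂ e₁ e₂ j, segment ℝ (pairMulLeft A₁ q) (pairMulLeft A₂ q) := by
  ext p
  simp only [HAux, segment_eq_image_smul_add_one_sub_smul, mem_iUnion, mem_image, exists_prop,
    ← pairMulLeft_smul_add_smul, mem_ofPred_eq, eq_comm]
  rfl

theorem convexHull_HAux (j : ℕ) :
    convexHull ℝ (HAux A₁ A₂ e₁ e₂ j) = convexHull ℝ (GAux A₁ A₂ e₁ e₂ j) := by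
  induction j with
  | zero => rw [HAux_zero, (convex_segment _ _).convexHull_eq, ← convexHull_pair]; rfl
  | succ j ih =>
    rw [HAux_succ, GAux_succ, convexHull_biUnion_segment,
      convexHull_image_union_image_congr ih]

theorem HPairs_succ (j : ℕ) :
    HPairs A₁ A₂ e₁ e₂ c f (j + 1) = pairDotProduct c '' HAux A₁ A₂ e₁ e₂ j := by
  ext p
  simp [HPairs, eq_comm]

theorem GPairs_succ (j : ℕ) :
    GPairs A₁ A₂ e₁ e₂ c f (j + 1) = pairDotProduct c '' GAux A₁ A₂ e₁ e₂ j := by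
  ext p
  simp [GPairs, eq_comm]

end Products

theorem convexHull_HPairs_eq_convexHull_GPairs
    (A₁ A₂ : Matrix (Fin n) (Fin n) ℝ) (e₁ e₂ c : Fin n → ℝ) (f : ℝ) (k : ℕ) :
    convexHull ℝ (HPairs A₁ A₂ e₁ e₂ c f k) =
      convexHull ℝ (GPairs A₁ A₂ e₁ e₂ c f k) := by
  cases k with
  | zero => rfl
  | succ j =>
    rw [HPairs_succ, GPairs_succ, ← LinearMap.image_convexHull, ← LinearMap.image_convexHull,
      convexHull_HAux]
end

section
/- Let x : [0, ε) → ℝⁿ be differentiable at t* ∈ [0, ε) with cᵀx(t*) + f = 0, and suppose cᵀA₁²x(t*) + cᵀA₁e₁ > 0 and cᵀA₂²x(t*) + cᵀA₂e₂ < 0. Define V₁(z) = (cᵀz+f)(cᵀA₁²z+cᵀA₁e₁) if cᵀz+f ≤ 0 and V₁(z) = (cᵀz+f)(cᵀA₂²z+cᵀA₂e₂) if cᵀz+f ≥ 0. If t ↦ V₁(x(t)) is differentiable at t*, then cᵀẋ(t*) = 0 and d/dt V₁(x(t))|_{t=t*} = 0. -/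
/-!
Write `g t = cᵀx(t) + f`, so that `V₁(x(t)) = g(t) P(t)` where `g ≤ 0` and `g(t) Q(t)` where
`g > 0`, with `P(t*) > 0 > Q(t*)`. Near `t*` both branches are `≤ 0`, and indeed
`m |g| ≤ -V₁(x(·))` for some `m > 0`. So `t*` is a local maximum of `V₁(x(·))`, whose derivative
therefore vanishes; then `V₁(x(t)) = o(t - t*)`, and the bound transfers this to `g`, so
`cᵀẋ(t*) = g'(t*) = 0`.
-/

open Matrix Filter Topology Asymptotics

theorem HasDerivAt.const_dotProduct {𝕜 ι : Type*} [NontriviallyNormedField 𝕜] [Fintype ι]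
    {x : 𝕜 → ι → 𝕜} {v : ι → 𝕜} {t : 𝕜} (hx : HasDerivAt x v t) (c : ι → 𝕜) :
    HasDerivAt (fun s => c ⬝ᵥ x s) (c ⬝ᵥ v) t := by
  simp only [dotProduct]
  exact HasDerivAt.fun_sum fun i _ => ((hasDerivAt_pi.mp hx) i).const_mul (c i)

theorem mul_abs_le_neg_ite_mul {m g p q : ℝ} (hp : m ≤ p) (hq : q ≤ -m) :
    m * |g| ≤ -(if g ≤ 0 then g * p else g * q) := by
  split_ifs with hg
  · rw [abs_of_nonpos hg]; nlinarith
  · rw [abs_of_pos (not_le.mp hg)]; nlinarith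

theorem exists_pos_eventually_mul_abs_le_neg_ite_mul {X : Type*} [TopologicalSpace X]
    {g P Q : X → ℝ} {x₀ : X} (hP : ContinuousAt P x₀) (hP₀ : 0 < P x₀)
    (hQ : ContinuousAt Q x₀) (hQ₀ : Q x₀ < 0) :
    ∃ m > 0, ∀ᶠ x in 𝓝 x₀, m * |g x| ≤ -(if g x ≤ 0 then g x * P x else g x * Q x) := by
  have hmin : 0 < min (P x₀) (-Q x₀) := lt_min hP₀ (neg_pos.mpr hQ₀)
  refine ⟨min (P x₀) (-Q x₀) / 2, half_pos hmin, ?_⟩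
  have hPm : min (P x₀) (-Q x₀) / 2 < P x₀ := by linarith [min_le_left (P x₀) (-Q x₀)]
  have hQm : Q x₀ < -(min (P x₀) (-Q x₀) / 2) := by linarith [min_le_right (P x₀) (-Q x₀)]
  filter_upwards [hP.eventually (eventually_gt_nhds hPm),
    hQ.eventually (eventually_lt_nhds hQm)] with x hPx hQx
  exact mul_abs_le_neg_ite_mul hPx.le hQx.le

theorem HasDerivAt.hasDerivAt_zero_of_isBigO {𝕜 E F : Type*} [NontriviallyNormedField 𝕜]
    [NormedAddCommGroup E] [NormedSpace 𝕜 E] [NormedAddCommGroup F] [NormedSpace 𝕜 F]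
    {f : 𝕜 → E} {g : 𝕜 → F} {t₀ : 𝕜} (hf : HasDerivAt f 0 t₀) (hf₀ : f t₀ = 0)
    (hg₀ : g t₀ = 0) (hgf : g =O[𝓝 t₀] f) : HasDerivAt g 0 t₀ := by
  rw [hasDerivAt_iff_isLittleO] at hf ⊢
  simp only [hf₀, hg₀, smul_zero, sub_zero] at hf ⊢
  exact hgf.trans_isLittleO hf

theorem HasDerivAt.eq_zero_and_eq_zero_of_ite_mul {g P Q : ℝ → ℝ} {t₀ a d : ℝ}
    (hg : HasDerivAt g a t₀) (hg₀ : g t₀ = 0) (hP : ContinuousAt P t₀) (hP₀ : 0 < P t₀)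
    (hQ : ContinuousAt Q t₀) (hQ₀ : Q t₀ < 0)
    (hV : HasDerivAt (fun t => if g t ≤ 0 then g t * P t else g t * Q t) d t₀) :
    a = 0 ∧ d = 0 := by
  obtain ⟨m, hm, hbound⟩ := exists_pos_eventually_mul_abs_le_neg_ite_mul (g := g) hP hP₀ hQ hQ₀
  have hV₀ : (if g t₀ ≤ 0 then g t₀ * P t₀ else g t₀ * Q t₀) = 0 := by simp [hg₀]
  have hmax : IsLocalMax (fun t => if g t ≤ 0 then g t * P t else g t * Q t) t₀ := by
    filter_upwards [hbound] with t ht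
    rw [hV₀]
    nlinarith [abs_nonneg (g t)]
  have hd : d = 0 := hmax.hasDerivAt_eq_zero hV
  have hgV : g =O[𝓝 t₀] fun t => if g t ≤ 0 then g t * P t else g t * Q t := by
    refine IsBigO.of_bound m⁻¹ ?_
    filter_upwards [hbound] with t ht
    rw [Real.norm_eq_abs, Real.norm_eq_abs, ← div_eq_inv_mul, le_div_iff₀ hm, mul_comm]
    exact ht.trans (neg_le_abs _)
  subst hd
  exact ⟨hg.unique (hV.hasDerivAt_zero_of_isBigO hV₀ hg₀ hgV), rfl⟩

theorem V1_derivative_vanishes_general (n : ℕ)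
    (A₁ A₂ : Matrix (Fin n) (Fin n) ℝ) (e₁ e₂ c : Fin n → ℝ) (f : ℝ)
    (x : ℝ → Fin n → ℝ) (tstar : ℝ)
    (v : Fin n → ℝ) (hx : HasDerivAt x v tstar)
    (hon : c ⬝ᵥ x tstar + f = 0)
    (h1 : 0 < (c ᵥ* (A₁ * A₁)) ⬝ᵥ x tstar + (c ᵥ* A₁) ⬝ᵥ e₁)
    (h2 : (c ᵥ* (A₂ * A₂)) ⬝ᵥ x tstar + (c ᵥ* A₂) ⬝ᵥ e₂ < 0)
    (d : ℝ)
    (hV : HasDerivAt (fun t : ℝ =>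
      if c ⬝ᵥ x t + f ≤ 0 then
        (c ⬝ᵥ x t + f) * ((c ᵥ* (A₁ * A₁)) ⬝ᵥ x t + (c ᵥ* A₁) ⬝ᵥ e₁)
      else
        (c ⬝ᵥ x t + f) * ((c ᵥ* (A₂ * A₂)) ⬝ᵥ x t + (c ᵥ* A₂) ⬝ᵥ e₂)) d tstar) :
    c ⬝ᵥ v = 0 ∧ d = 0 :=
  ((hx.const_dotProduct c).add_const f).eq_zero_and_eq_zero_of_ite_mul hon
    (((hx.const_dotProduct _).add_const _).continuousAt) h1
    (((hx.const_dotProduct _).add_const _).continuousAt) h2 hV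

theorem V1_derivative_vanishes (n : ℕ)
    (A₁ A₂ : Matrix (Fin n) (Fin n) ℝ) (e₁ e₂ c : Fin n → ℝ) (f : ℝ)
    (ε : ℝ) (hε : 0 < ε) (x : ℝ → Fin n → ℝ) (tstar : ℝ)
    (htstar : tstar ∈ Set.Ico (0:ℝ) ε)
    (v : Fin n → ℝ) (hx : HasDerivAt x v tstar)
    (hon : c ⬝ᵥ x tstar + f = 0)
    (h1 : 0 < (c ᵥ* (A₁ * A₁)) ⬝ᵥ x tstar + (c ᵥ* A₁) ⬝ᵥ e₁)
    (h2 : (c ᵥ* (A₂ * A₂)) ⬝ᵥ x tstar + (c ᵥ* A₂) ⬝ᵥ e₂ < 0)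
    (d : ℝ)
    (hV : HasDerivAt (fun t : ℝ =>
      if c ⬝ᵥ x t + f ≤ 0 then
        (c ⬝ᵥ x t + f) * ((c ᵥ* (A₁ * A₁)) ⬝ᵥ x t + (c ᵥ* A₁) ⬝ᵥ e₁)
      else
        (c ⬝ᵥ x t + f) * ((c ᵥ* (A₂ * A₂)) ⬝ᵥ x t + (c ᵥ* A₂) ⬝ᵥ e₂)) d tstar) :
    c ⬝ᵥ v = 0 ∧ d = 0 :=
  V1_derivative_vanishes_general n A₁ A₂ e₁ e₂ c f x tstar v hx hon h1 h2 d hV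
end

section
/- Suppose there exists a 2×2 lower triangular matrix M with positive diagonal entries such that [cᵀ; cᵀA₁] = M[cᵀ; cᵀA₂] and [f; cᵀe₁] ≻ M[f; cᵀe₂] (lexicographically). Then for every ξ with cᵀξ + f = 0, at least one of cᵀA₁ξ + cᵀe₁ > 0 or cᵀA₂ξ + cᵀe₂ < 0 holds. -/
/-!
Dotting the rows of `hP` with `ξ` gives `c ⬝ ξ = M₀₀ (c ⬝ ξ)` and
`cA₁ ⬝ ξ = M₁₀ (c ⬝ ξ) + M₁₁ (cA₂ ⬝ ξ)`. On the hyperplane `c ⬝ ξ = -f` the first identity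
forces `f = M₀₀ f`, so the first entry of the lexicographic inequality vanishes and the second
must be positive; substituting, that says `cA₁ ⬝ ξ + c ⬝ e₁ > M₁₁ (cA₂ ⬝ ξ + c ⬝ e₂)`.
-/

open Matrix

theorem lexPos_fin_two_iff {v : Fin 2 → ℝ} : lexPos v ↔ 0 < v 0 ∨ v 0 = 0 ∧ 0 < v 1 := by
  constructor
  · rintro ⟨k, hk, hbefore⟩
    fin_cases k
    · exact Or.inl hk
    · exact Or.inr ⟨hbefore 0 Fin.zero_lt_one, hk⟩
  · rintro (h0 | ⟨h0, h1⟩)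
    · exact ⟨0, h0, fun j hj => absurd hj (Fin.not_lt_zero j)⟩
    · refine ⟨1, h1, fun j hj => ?_⟩
      rwa [show j = 0 by omega]

theorem Matrix.mul_of_fin_two_row {m n R : Type*} [Fintype m] [NonUnitalNonAssocSemiring R]
    (M : Matrix m (Fin 2) R) (x y : n → R) (i : m) :
    (M * Matrix.of ![x, y]) i = M i 0 • x + M i 1 • y := by
  ext j
  simp [Matrix.mul_apply, Fin.sum_univ_two]

theorem strict_lex_gives_transversality_general (n : ℕ)
    (A₁ A₂ : Matrix (Fin n) (Fin n) ℝ) (e₁ e₂ c : Fin n → ℝ) (f : ℝ)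
    (M : Matrix (Fin 2) (Fin 2) ℝ)
    (hMlow : M 0 1 = 0) (hM11 : 0 < M 1 1)
    (hP : Matrix.of ![c, c ᵥ* A₁] = M * Matrix.of ![c, c ᵥ* A₂])
    (hq : lexPos (![f, c ⬝ᵥ e₁] - M *ᵥ ![f, c ⬝ᵥ e₂])) :
    ∀ ξ : Fin n → ℝ, c ⬝ᵥ ξ + f = 0 →
      0 < (c ᵥ* A₁) ⬝ᵥ ξ + c ⬝ᵥ e₁ ∨ (c ᵥ* A₂) ⬝ᵥ ξ + c ⬝ᵥ e₂ < 0 := by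
  intro ξ hξ
  have hcξ : c ⬝ᵥ ξ = -f := by linarith
  have hrow0 : c = M 0 0 • c := by
    have h := congrFun hP 0
    rwa [Matrix.mul_of_fin_two_row, hMlow, zero_smul, add_zero] at h
  have hrow1 : c ᵥ* A₁ = M 1 0 • c + M 1 1 • (c ᵥ* A₂) := by
    have h := congrFun hP 1
    rwa [Matrix.mul_of_fin_two_row] at h
  have hf : f = M 0 0 * f := by
    have h := congrArg (· ⬝ᵥ ξ) hrow0
    simp only [smul_dotProduct, smul_eq_mul, hcξ] at h
    linarith
  have hq1 : M 1 0 * f + M 1 1 * (c ⬝ᵥ e₂) < c ⬝ᵥ e₁ := by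
    rcases lexPos_fin_two_iff.mp hq with h0 | ⟨-, h1⟩
    · simp only [Pi.sub_apply, mulVec_fin_two, cons_val_zero, hMlow, zero_mul, add_zero,
        sub_pos] at h0
      linarith
    · simpa using h1
  have hA₁ : (c ᵥ* A₁) ⬝ᵥ ξ = -(M 1 0 * f) + M 1 1 * ((c ᵥ* A₂) ⬝ᵥ ξ) := by
    rw [hrow1, add_dotProduct, smul_dotProduct, smul_dotProduct, smul_eq_mul, smul_eq_mul, hcξ]
    ring
  have hgap : M 1 1 * ((c ᵥ* A₂) ⬝ᵥ ξ + c ⬝ᵥ e₂) < (c ᵥ* A₁) ⬝ᵥ ξ + c ⬝ᵥ e₁ := by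
    rw [hA₁]
    linarith
  rcases lt_or_ge ((c ᵥ* A₂) ⬝ᵥ ξ + c ⬝ᵥ e₂) 0 with hneg | hnonneg
  · exact Or.inr hneg
  · exact Or.inl ((mul_nonneg hM11.le hnonneg).trans_lt hgap)

theorem strict_lex_gives_transversality (n : ℕ)
    (A₁ A₂ : Matrix (Fin n) (Fin n) ℝ) (e₁ e₂ c : Fin n → ℝ) (f : ℝ)
    (M : Matrix (Fin 2) (Fin 2) ℝ)
    (hMlow : M 0 1 = 0) (hM00 : 0 < M 0 0) (hM11 : 0 < M 1 1)
    (hP : Matrix.of ![c, c ᵥ* A₁] = M * Matrix.of ![c, c ᵥ* A₂])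
    (hq : lexPos (![f, c ⬝ᵥ e₁] - M *ᵥ ![f, c ⬝ᵥ e₂])) :
    ∀ ξ : Fin n → ℝ, c ⬝ᵥ ξ + f = 0 →
      0 < (c ᵥ* A₁) ⬝ᵥ ξ + c ⬝ᵥ e₁ ∨ (c ᵥ* A₂) ⬝ᵥ ξ + c ⬝ᵥ e₂ < 0 :=
  strict_lex_gives_transversality_general n A₁ A₂ e₁ e₂ c f M hMlow hM11 hP hq
end
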